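/- For every x ∈ X and every δ, η > 0, the noisy and marginal kernels satisfy sup_{A∈B(X)} (P̃_N(x,A) − P(x,A)) ≤ (η + 2 sup_{x'∈X} P[|W_{x',N} − 1| ≥ η/(2(1+η))]) + (δ + 2 sup_{x'∈X} P[|W_{x',N} − 1| ≥ δ/2]). Consequently, if condition (W1) holds (for every δ > 0, lim_{N→∞} sup_{x∈X} P[|W_{x,N} − 1| ≥ δ] = 0), then for every x ∈ X, lim_{N→∞} ‖P̃_N(x,·) − P(x,·)‖_TV = 0. -/

import Mathlib

/-!
For fixed `x` the two kernels differ only through `α̃_N(x,·) - α(x,·)`, so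
`|P̃_N(x,A) - P(x,A)| ≤ ∫ |α̃_N(x,y) - α(x,y)| q(x,y) μ(dy)` for every `A`. Writing `α̃_N(x,y)` as
the mean of `min 1 (r W_y / W_x)`, with `r` the Metropolis–Hastings ratio, and using
`|min 1 (a u) - min 1 a| ≤ min |u - 1| 1` once for `u = W_y` and once for `u = W_x⁻¹` gives
`|α̃_N - α| ≤ E min |W_y - 1| 1 + E min |W_x⁻¹ - 1| 1`. Splitting each expectation on the event that
the weight is far from `1` bounds this uniformly in `y`; under (W1) the bound tends to `δ + η`,
which is arbitrarily small.
-/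

open MeasureTheory ProbabilityTheory Filter
open scoped ENNReal

/-- Metropolis--Hastings acceptance probability
`α(x,y) = min {1, π(y)q(y,x) / (π(x)q(x,y))}`. -/
noncomputable def mhAlpha {X : Type*} (pi : X → ℝ) (q : X → X → ℝ) (x y : X) : ℝ :=
  min 1 (pi y * q y x / (pi x * q x y))

/-- Noisy (Monte Carlo within Metropolis) acceptance probability
`α̃_N(x,y) = E[min {1, π(y)q(y,x)W_{y,N} / (π(x)q(x,y)W_{x,N})}]`,
the expectation being over independent weights `W_{x,N} ~ Q_N(x,·)` and `W_{y,N} ~ Q_N(y,·)`. -/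
noncomputable def noisyAlpha {X : Type*} [MeasurableSpace X] (pi : X → ℝ) (q : X → X → ℝ)
    (Q : ℕ → Kernel X ℝ) (N : ℕ) (x y : X) : ℝ :=
  ∫ w, ∫ u, min 1 (pi y * q y x * u / (pi x * q x y * w)) ∂((Q N) y) ∂((Q N) x)

/-- Marginal rejection probability `ρ(x) = 1 - ∫ α(x,y) q(x,y) μ(dy)`. -/
noncomputable def mhRho {X : Type*} [MeasurableSpace X] (μ : Measure X)
    (pi : X → ℝ) (q : X → X → ℝ) (x : X) : ℝ :=
  1 - ∫ y, mhAlpha pi q x y * q x y ∂μ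

/-- Noisy rejection probability `ρ̃_N(x) = 1 - ∫ α̃_N(x,y) q(x,y) μ(dy)`. -/
noncomputable def noisyRho {X : Type*} [MeasurableSpace X] (μ : Measure X)
    (pi : X → ℝ) (q : X → X → ℝ) (Q : ℕ → Kernel X ℝ) (N : ℕ) (x : X) : ℝ :=
  1 - ∫ y, noisyAlpha pi q Q N x y * q x y ∂μ

/-- The marginal MH kernel as a set function:
`P(x,A) = ∫_A α(x,z) q(x,z) μ(dz) + ρ(x) 1_A(x)`. -/
noncomputable def mhKer {X : Type*} [MeasurableSpace X] (μ : Measure X)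
    (pi : X → ℝ) (q : X → X → ℝ) (x : X) (A : Set X) : ℝ :=
  (∫ z in A, mhAlpha pi q x z * q x z ∂μ) +
    Set.indicator A (fun _ => mhRho μ pi q x) x

/-- The noisy Markov kernel as a set function:
`P̃_N(x,A) = ∫_A α̃_N(x,z) q(x,z) μ(dz) + ρ̃_N(x) 1_A(x)`. -/
noncomputable def noisyKer {X : Type*} [MeasurableSpace X] (μ : Measure X)
    (pi : X → ℝ) (q : X → X → ℝ) (Q : ℕ → Kernel X ℝ) (N : ℕ) (x : X) (A : Set X) : ℝ :=
  (∫ z in A, noisyAlpha pi q Q N x z * q x z ∂μ) +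
    Set.indicator A (fun _ => noisyRho μ pi q Q N x) x

open Set Topology

theorem abs_min_one_mul_sub_min_one_le {a u : ℝ} (ha : 0 ≤ a) (hu : 0 < u) :
    |min 1 (a * u) - min 1 a| ≤ min |u - 1| 1 := by
  refine le_min ?_ ?_
  · have := le_abs_self (u - 1)
    have := neg_abs_le (u - 1)
    rcases le_or_gt (a * u) 1 with hau | hau <;> rcases le_or_gt a 1 with ha1 | ha1
    · rw [min_eq_right hau, min_eq_right ha1, abs_sub_le_iff]
      constructor <;> nlinarith
    · rw [min_eq_right hau, min_eq_left ha1.le, abs_sub_le_iff]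
      constructor <;> nlinarith
    · rw [min_eq_left hau.le, min_eq_right ha1, abs_sub_le_iff]
      constructor <;> nlinarith
    · rw [min_eq_left hau.le, min_eq_left ha1.le, sub_self, abs_zero]
      positivity
  · have := le_min zero_le_one (mul_nonneg ha hu.le)
    have := le_min zero_le_one ha
    rw [abs_sub_le_iff]
    constructor <;> linarith [min_le_left 1 (a * u), min_le_left 1 a]

/-- With `r = η / (2(1+η))`, `|w - 1| < r` gives `|w⁻¹ - 1| < r / (1 - r) = η / (2 + η)`. -/
theorem abs_inv_sub_one_le_of_abs_sub_one_lt {w η : ℝ} (hη : 0 < η)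
    (h : |w - 1| < η / (2 * (1 + η))) : |w⁻¹ - 1| ≤ η / 2 := by
  have hr : η / (2 * (1 + η)) * (2 * (1 + η)) = η := div_mul_cancel₀ _ (by positivity)
  have ht : |w - 1| * (2 * (1 + η)) < η := by
    nlinarith [mul_lt_mul_of_pos_right h (show (0 : ℝ) < 2 * (1 + η) by positivity)]
  have hw1 : 1 - |w - 1| ≤ w := by linarith [neg_abs_le (w - 1)]
  have hw : 0 < w := by nlinarith [abs_nonneg (w - 1)]
  rw [show w⁻¹ - 1 = (1 - w) / w by field_simp, abs_div, abs_of_pos hw, abs_sub_comm,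
    div_le_iff₀ hw]
  nlinarith [abs_nonneg (w - 1), mul_le_mul_of_nonneg_left hw1 hη.le]

theorem min_one_le_add_indicator {α : Type*} {s c : ℝ} {E : Set α} {v : α} (hc : 0 ≤ c)
    (h : v ∉ E → s ≤ c) : min s 1 ≤ c + E.indicator 1 v := by
  by_cases hv : v ∈ E
  · rw [indicator_of_mem hv, Pi.one_apply]
    linarith [min_le_right s 1]
  · rw [indicator_of_notMem hv, add_zero]
    exact (min_le_left s 1).trans (h hv)

section ProbabilityMeasure

variable {α : Type*} [MeasurableSpace α] {ν : Measure α}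

theorem integrable_of_ae_mem_Icc [IsFiniteMeasure ν] {f : α → ℝ}
    (hf : AEStronglyMeasurable f ν) (h : ∀ᵐ v ∂ν, f v ∈ Icc 0 1) : Integrable f ν :=
  .of_bound hf 1 <| h.mono fun _ hv => by rw [Real.norm_eq_abs, abs_of_nonneg hv.1]; exact hv.2

variable [IsProbabilityMeasure ν]

theorem integral_mem_Icc_zero_one {f : α → ℝ} (h : ∀ᵐ v ∂ν, f v ∈ Icc 0 1) :
    ∫ v, f v ∂ν ∈ Icc 0 1 := by
  refine ⟨integral_nonneg_of_ae (h.mono fun _ hv => hv.1), ?_⟩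
  have := norm_integral_le_of_norm_le_const (μ := ν) (C := 1) <|
    h.mono fun _ hv => by rw [Real.norm_eq_abs, abs_of_nonneg hv.1]; exact hv.2
  simpa using (le_abs_self _).trans this

theorem integral_le_add_measureReal {g : α → ℝ} {E : Set α} {c : ℝ} (hE : MeasurableSet E)
    (hg0 : 0 ≤ᵐ[ν] g) (hg : ∀ᵐ v ∂ν, g v ≤ c + E.indicator 1 v) :
    ∫ v, g v ∂ν ≤ c + ν.real E := by
  have hind : Integrable (E.indicator (1 : α → ℝ)) ν := (integrable_const (1 : ℝ)).indicator hE
  calc ∫ v, g v ∂ν ≤ ∫ v, (c + E.indicator 1 v) ∂ν :=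
        integral_mono_of_nonneg hg0 ((integrable_const c).add hind) hg
    _ = c + ν.real E := by
        rw [integral_add (integrable_const c) hind, integral_indicator_one hE]
        simp

theorem abs_integral_sub_le {f g : α → ℝ} {c : ℝ} (hf : Integrable f ν) (hg : Integrable g ν)
    (h : ∀ᵐ v ∂ν, |f v - c| ≤ g v) : |∫ v, f v ∂ν - c| ≤ ∫ v, g v ∂ν := by
  have hsub : ∫ v, (f v - c) ∂ν = ∫ v, f v ∂ν - c := by
    rw [integral_sub hf (integrable_const c)]
    simp
  rw [← hsub]
  exact norm_integral_le_of_norm_le (f := fun v => f v - c) hg h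

end ProbabilityMeasure

section Weights

variable {ν ρ : Measure ℝ}

theorem ae_pos_of_measure_nonpos_eq_zero (h : ν {w | w ≤ 0} = 0) : ∀ᵐ w ∂ν, 0 < w := by
  simpa only [ae_iff, not_lt] using h

variable [IsProbabilityMeasure ν] [IsProbabilityMeasure ρ]

theorem integral_min_abs_sub_one_le {c : ℝ} (hc : 0 ≤ c) :
    ∫ u, min |u - 1| 1 ∂ρ ≤ c + ρ.real {v | c ≤ |v - 1|} :=
  integral_le_add_measureReal (measurableSet_le measurable_const (by fun_prop))
    (ae_of_all _ fun _ => le_min (abs_nonneg _) zero_le_one)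
    (ae_of_all _ fun _ => min_one_le_add_indicator hc fun hu => (not_le.1 hu).le)

theorem integral_min_abs_inv_sub_one_le {η : ℝ} (hη : 0 < η) :
    ∫ w, min |w⁻¹ - 1| 1 ∂ν ≤ η / 2 + ν.real {v | η / (2 * (1 + η)) ≤ |v - 1|} :=
  integral_le_add_measureReal (measurableSet_le measurable_const (by fun_prop))
    (ae_of_all _ fun _ => le_min (abs_nonneg _) zero_le_one)
    (ae_of_all _ fun _ => min_one_le_add_indicator (by positivity) fun hw =>
      abs_inv_sub_one_le_of_abs_sub_one_lt hη (not_le.1 hw))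

theorem abs_integral_integral_min_one_sub_min_one_le (hν : ∀ᵐ w ∂ν, 0 < w)
    (hρ : ∀ᵐ u ∂ρ, 0 < u) {b : ℝ} (hb : 0 ≤ b) :
    |∫ w, ∫ u, min 1 (b * u / w) ∂ρ ∂ν - min 1 b|
      ≤ ∫ u, min |u - 1| 1 ∂ρ + ∫ w, min |w⁻¹ - 1| 1 ∂ν := by
  have hmem : ∀ w, 0 < w → ∀ u, 0 < u → min 1 (b * u / w) ∈ Icc 0 1 :=
    fun w hw u hu => ⟨le_min zero_le_one (by positivity), min_le_left _ _⟩
  have hpt : ∀ w, 0 < w → ∀ u, 0 < u →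
      |min 1 (b * u / w) - min 1 b| ≤ min |u - 1| 1 + min |w⁻¹ - 1| 1 := fun w hw u hu =>
    calc |min 1 (b * u / w) - min 1 b|
        ≤ |min 1 (b / w * u) - min 1 (b / w)| + |min 1 (b * w⁻¹) - min 1 b| := by
          rw [div_mul_eq_mul_div, ← div_eq_mul_inv]
          exact abs_sub_le _ _ _
      _ ≤ min |u - 1| 1 + min |w⁻¹ - 1| 1 :=
          add_le_add (abs_min_one_mul_sub_min_one_le (by positivity) hu)
            (abs_min_one_mul_sub_min_one_le hb (by positivity))
  have hmeas : Measurable fun p : ℝ × ℝ => min 1 (b * p.2 / p.1) := by fun_prop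
  have hdev : Integrable (fun u => min |u - 1| 1) ρ :=
    integrable_of_ae_mem_Icc (by fun_prop)
      (ae_of_all _ fun _ => ⟨le_min (abs_nonneg _) zero_le_one, min_le_right _ _⟩)
  have hdev' : Integrable (fun w => min |w⁻¹ - 1| 1) ν :=
    integrable_of_ae_mem_Icc (by fun_prop)
      (ae_of_all _ fun _ => ⟨le_min (abs_nonneg _) zero_le_one, min_le_right _ _⟩)
  have hinner : ∀ w, 0 < w → |∫ u, min 1 (b * u / w) ∂ρ - min 1 b|
      ≤ ∫ u, min |u - 1| 1 ∂ρ + min |w⁻¹ - 1| 1 := fun w hw => by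
    have := abs_integral_sub_le
      (integrable_of_ae_mem_Icc (by fun_prop) (hρ.mono (hmem w hw)))
      (hdev.add (integrable_const _)) (hρ.mono (hpt w hw))
    rwa [integral_add' hdev (integrable_const _), integral_const, probReal_univ,
      one_smul] at this
  have hI : Integrable (fun w => ∫ u, min 1 (b * u / w) ∂ρ) ν :=
    integrable_of_ae_mem_Icc hmeas.stronglyMeasurable.integral_prod_right'.aestronglyMeasurable
      (hν.mono fun w hw => integral_mem_Icc_zero_one (hρ.mono (hmem w hw)))
  have := abs_integral_sub_le hI ((integrable_const _).add hdev') (hν.mono hinner)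
  rwa [integral_add' (integrable_const _) hdev', integral_const, probReal_univ, one_smul] at this

end Weights

theorem tendsto_zero_of_nonneg_of_forall_le_tendsto {ι : Type*} {l : Filter ι} {F : ι → ℝ}
    (hF : ∀ i, 0 ≤ F i) (h : ∀ ε > 0, ∃ U : ι → ℝ, (∀ i, F i ≤ U i) ∧ Tendsto U l (𝓝 ε)) :
    Tendsto F l (𝓝 0) := by
  refine tendsto_order.2 ⟨fun a ha => .of_forall fun i => ha.trans_le (hF i), fun a ha => ?_⟩
  obtain ⟨U, hFU, hU⟩ := h (a / 2) (half_pos ha)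
  exact (hU.eventually (gt_mem_nhds (half_lt_self ha))).mono fun i hi => (hFU i).trans_lt hi

theorem abs_setIntegral_sub_indicator_integral_le {X : Type*} [MeasurableSpace X]
    {μ : Measure X} {D : X → ℝ} (hD : Integrable D μ) {A : Set X} (hA : MeasurableSet A)
    (x : X) : |∫ y in A, D y ∂μ - A.indicator (fun _ => ∫ y, D y ∂μ) x| ≤ ∫ y, |D y| ∂μ := by
  have hset : ∀ s, |∫ y in s, D y ∂μ| ≤ ∫ y, |D y| ∂μ := fun s =>
    abs_integral_le_integral_abs.trans
      (setIntegral_le_integral hD.abs (ae_of_all _ fun _ => abs_nonneg _))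
  by_cases hx : x ∈ A
  · rw [indicator_of_mem hx, ← integral_add_compl hA hD, sub_add_cancel_left, abs_neg]
    exact hset Aᶜ
  · rw [indicator_of_notMem hx, sub_zero]
    exact hset A

section WeightTail

variable {X : Type*} [MeasurableSpace X]

noncomputable def weightTailSup (κ : Kernel X ℝ) (r : ℝ) : ℝ :=
  ⨆ x, (κ x).real {w | r ≤ |w - 1|}

theorem weightTailSup_nonneg (κ : Kernel X ℝ) (r : ℝ) : 0 ≤ weightTailSup κ r :=
  Real.iSup_nonneg fun _ => measureReal_nonneg

theorem measureReal_le_weightTailSup (κ : Kernel X ℝ) [IsMarkovKernel κ] (r : ℝ) (x : X) :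
    (κ x).real {w | r ≤ |w - 1|} ≤ weightTailSup κ r :=
  le_ciSup (f := fun x => (κ x).real {w | r ≤ |w - 1|})
    ⟨1, by rintro _ ⟨x', rfl⟩; exact measureReal_le_one⟩ x

theorem tendsto_weightTailSup {ι : Type*} {l : Filter ι} {κ : ι → Kernel X ℝ}
    [∀ i, IsFiniteKernel (κ i)] {r : ℝ}
    (h : Tendsto (fun i => ⨆ x, κ i x {w | r ≤ |w - 1|}) l (𝓝 0)) :
    Tendsto (fun i => weightTailSup (κ i) r) l (𝓝 0) := by
  have := (ENNReal.tendsto_toReal ENNReal.zero_ne_top).comp h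
  rw [ENNReal.toReal_zero] at this
  refine this.congr fun i => ?_
  simp only [Function.comp_apply, weightTailSup, measureReal_def]
  exact ENNReal.toReal_iSup fun x => measure_ne_top _ _

end WeightTail

section MetropolisHastings

variable {X : Type*} {pi : X → ℝ} {q : X → X → ℝ}

theorem mhAlpha_mem_Icc (hpi : ∀ x, 0 ≤ pi x) (hq : ∀ x y, 0 ≤ q x y) (x y : X) :
    mhAlpha pi q x y ∈ Icc 0 1 :=
  ⟨le_min zero_le_one (div_nonneg (mul_nonneg (hpi y) (hq y x)) (mul_nonneg (hpi x) (hq x y))),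
    min_le_left _ _⟩

variable [MeasurableSpace X] {μ : Measure X} {Q : ℕ → Kernel X ℝ} {N : ℕ} {x : X}

theorem measurable_mhAlpha (hpi : Measurable pi) (hq : Measurable (Function.uncurry q))
    (x : X) : Measurable (mhAlpha pi q x) := by
  have hq₁ : Measurable fun y => q y x := hq.comp (measurable_id.prodMk measurable_const)
  have hq₂ : Measurable fun y => q x y := hq.comp (measurable_const.prodMk measurable_id)
  unfold mhAlpha
  fun_prop

theorem noisyAlpha_eq (x y : X) :
    noisyAlpha pi q Q N x y
      = ∫ w, ∫ u, min 1 (pi y * q y x / (pi x * q x y) * u / w) ∂Q N y ∂Q N x := by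
  simp only [noisyAlpha, div_mul_eq_mul_div, div_div]

theorem noisyAlpha_mem_Icc [IsMarkovKernel (Q N)] (hpi : ∀ x, 0 ≤ pi x)
    (hq : ∀ x y, 0 ≤ q x y) (hQ : ∀ x, ∀ᵐ w ∂Q N x, 0 < w) (x y : X) :
    noisyAlpha pi q Q N x y ∈ Icc 0 1 := by
  have hb := div_nonneg (mul_nonneg (hpi y) (hq y x)) (mul_nonneg (hpi x) (hq x y))
  rw [noisyAlpha_eq]
  exact integral_mem_Icc_zero_one <| (hQ x).mono fun w hw => integral_mem_Icc_zero_one <|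
    (hQ y).mono fun u hu => ⟨le_min zero_le_one (div_nonneg (mul_nonneg hb hu.le) hw.le),
      min_le_left _ _⟩

theorem measurable_noisyAlpha [IsSFiniteKernel (Q N)] (hpi : Measurable pi)
    (hq : Measurable (Function.uncurry q)) (x : X) : Measurable (noisyAlpha pi q Q N x) := by
  have hq₁ : Measurable fun y => q y x := hq.comp (measurable_id.prodMk measurable_const)
  have hq₂ : Measurable fun y => q x y := hq.comp (measurable_const.prodMk measurable_id)
  have hF : Measurable fun p : (X × ℝ) × ℝ =>
      min 1 (pi p.1.1 * q p.1.1 x * p.2 / (pi x * q x p.1.1 * p.1.2)) := by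
    fun_prop
  have hinner : StronglyMeasurable fun p : X × ℝ =>
      ∫ u, min 1 (pi p.1 * q p.1 x * u / (pi x * q x p.1 * p.2)) ∂Q N p.1 :=
    hF.stronglyMeasurable.integral_kernel_prod_right' (κ := (Q N).prodMkRight ℝ)
  exact (hinner.integral_prod_right' (ν := Q N x)).measurable

theorem abs_noisyAlpha_sub_mhAlpha_le [IsMarkovKernel (Q N)] (hpi : ∀ x, 0 ≤ pi x)
    (hq : ∀ x y, 0 ≤ q x y) (hQ : ∀ x, ∀ᵐ w ∂Q N x, 0 < w) {δ η : ℝ} (hδ : 0 < δ)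
    (hη : 0 < η) (x y : X) :
    |noisyAlpha pi q Q N x y - mhAlpha pi q x y|
      ≤ (η / 2 + weightTailSup (Q N) (η / (2 * (1 + η))))
        + (δ / 2 + weightTailSup (Q N) (δ / 2)) := by
  have hb := div_nonneg (mul_nonneg (hpi y) (hq y x)) (mul_nonneg (hpi x) (hq x y))
  rw [noisyAlpha_eq]
  calc _ ≤ ∫ u, min |u - 1| 1 ∂Q N y + ∫ w, min |w⁻¹ - 1| 1 ∂Q N x :=
        abs_integral_integral_min_one_sub_min_one_le (hQ x) (hQ y) hb
    _ ≤ (δ / 2 + (Q N y).real {v | δ / 2 ≤ |v - 1|})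
          + (η / 2 + (Q N x).real {v | η / (2 * (1 + η)) ≤ |v - 1|}) :=
        add_le_add (integral_min_abs_sub_one_le (by positivity))
          (integral_min_abs_inv_sub_one_le hη)
    _ ≤ _ := by
        linarith [measureReal_le_weightTailSup (Q N) (δ / 2) y,
          measureReal_le_weightTailSup (Q N) (η / (2 * (1 + η))) x]

theorem noisyKer_sub_mhKer (hn : Integrable (fun y => noisyAlpha pi q Q N x y * q x y) μ)
    (hm : Integrable (fun y => mhAlpha pi q x y * q x y) μ) (A : Set X) :
    noisyKer μ pi q Q N x A - mhKer μ pi q x A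
      = ∫ y in A, (noisyAlpha pi q Q N x y * q x y - mhAlpha pi q x y * q x y) ∂μ
        - A.indicator
          (fun _ => ∫ y, (noisyAlpha pi q Q N x y * q x y - mhAlpha pi q x y * q x y) ∂μ) x := by
  rw [integral_sub hn hm, integral_sub hn.integrableOn hm.integrableOn]
  by_cases hx : x ∈ A
  · simp only [noisyKer, mhKer, noisyRho, mhRho, indicator_of_mem hx]
    ring
  · simp only [noisyKer, mhKer, indicator_of_notMem hx]
    ring

theorem abs_noisyKer_sub_mhKer_le (hq : ∀ y, 0 ≤ q x y) (hq_one : ∫ y, q x y ∂μ = 1)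
    (hn : Measurable (noisyAlpha pi q Q N x)) (hn01 : ∀ y, noisyAlpha pi q Q N x y ∈ Icc 0 1)
    (hm : Measurable (mhAlpha pi q x)) (hm01 : ∀ y, mhAlpha pi q x y ∈ Icc 0 1) {B : ℝ}
    (hB : ∀ y, |noisyAlpha pi q Q N x y - mhAlpha pi q x y| ≤ B) {A : Set X}
    (hA : MeasurableSet A) : |noisyKer μ pi q Q N x A - mhKer μ pi q x A| ≤ B := by
  have hqi : Integrable (q x) μ := .of_integral_ne_zero (by rw [hq_one]; exact one_ne_zero)
  have hmul : ∀ {a : X → ℝ}, Measurable a → (∀ y, a y ∈ Icc 0 1) →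
      Integrable (fun y => a y * q x y) μ := fun ha ha01 =>
    hqi.bdd_mul ha.aestronglyMeasurable <| ae_of_all _ fun y => by
      rw [Real.norm_eq_abs, abs_of_nonneg (ha01 y).1]
      exact (ha01 y).2
  rw [noisyKer_sub_mhKer (hmul hn hn01) (hmul hm hm01)]
  calc _ ≤ ∫ y, |noisyAlpha pi q Q N x y * q x y - mhAlpha pi q x y * q x y| ∂μ :=
        abs_setIntegral_sub_indicator_integral_le ((hmul hn hn01).sub (hmul hm hm01)) hA x
    _ ≤ ∫ y, B * q x y ∂μ :=
        integral_mono_of_nonneg (ae_of_all _ fun _ => abs_nonneg _) (hqi.const_mul B) <|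
          ae_of_all _ fun y => by
            dsimp only
            rw [← sub_mul, abs_mul, abs_of_nonneg (hq y)]
            exact mul_le_mul_of_nonneg_right (hB y) (hq y)
    _ = B := by rw [integral_const_mul, hq_one, mul_one]

end MetropolisHastings

theorem noisy_kernel_tv_convergence_general
    {X : Type*} [MeasurableSpace X] (μ : Measure X)
    (pi : X → ℝ) (q : X → X → ℝ)
    (hpi_pos : ∀ x, 0 < pi x) (hpi_meas : Measurable pi)
    (hq_meas : Measurable (Function.uncurry q)) (hq_nonneg : ∀ x y, 0 ≤ q x y)
    (hq_one : ∀ x, ∫ y, q x y ∂μ = 1)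
    (Q : ℕ → Kernel X ℝ) [∀ N, IsMarkovKernel (Q N)]
    (hQ_pos : ∀ N x, (Q N) x {w : ℝ | w ≤ 0} = 0) :
    (∀ (N : ℕ) (x : X) (δ η : ℝ), 0 < δ → 0 < η →
      (⨆ A : {A : Set X // MeasurableSet A},
          (noisyKer μ pi q Q N x A - mhKer μ pi q x A))
        ≤ (η + 2 * ⨆ x', (((Q N) x') {w : ℝ | η / (2 * (1 + η)) ≤ |w - 1|}).toReal)
          + (δ + 2 * ⨆ x', (((Q N) x') {w : ℝ | δ / 2 ≤ |w - 1|}).toReal)) ∧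
    ((∀ δ : ℝ, 0 < δ →
        Filter.Tendsto (fun N : ℕ => ⨆ x, (Q N) x {w : ℝ | δ ≤ |w - 1|})
          Filter.atTop (nhds 0)) →
      ∀ x : X,
        Filter.Tendsto
          (fun N : ℕ => ⨆ A : {A : Set X // MeasurableSet A},
            |noisyKer μ pi q Q N x A - mhKer μ pi q x A|)
          Filter.atTop (nhds 0)) := by
  have hpi : ∀ x, 0 ≤ pi x := fun x => (hpi_pos x).le
  have hQ : ∀ N x, ∀ᵐ w ∂Q N x, 0 < w := fun N x => ae_pos_of_measure_nonpos_eq_zero (hQ_pos N x)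
  have hbound : ∀ N x δ η, 0 < δ → 0 < η → ∀ A : {A : Set X // MeasurableSet A},
      |noisyKer μ pi q Q N x A - mhKer μ pi q x A|
        ≤ (η + 2 * weightTailSup (Q N) (η / (2 * (1 + η))))
          + (δ + 2 * weightTailSup (Q N) (δ / 2)) := fun N x δ η hδ hη A => by
    have := abs_noisyKer_sub_mhKer_le (hq_nonneg x) (hq_one x)
      (measurable_noisyAlpha hpi_meas hq_meas x) (noisyAlpha_mem_Icc hpi hq_nonneg (hQ N) x)
      (measurable_mhAlpha hpi_meas hq_meas x) (mhAlpha_mem_Icc hpi hq_nonneg x)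
      (abs_noisyAlpha_sub_mhAlpha_le hpi hq_nonneg (hQ N) hδ hη x) A.2
    linarith [weightTailSup_nonneg (Q N) (η / (2 * (1 + η))), weightTailSup_nonneg (Q N) (δ / 2)]
  have : Nonempty {A : Set X // MeasurableSet A} := ⟨⟨∅, .empty⟩⟩
  refine ⟨fun N x δ η hδ hη => ciSup_le fun A => (le_abs_self _).trans (hbound N x δ η hδ hη A),
    fun hW x => tendsto_zero_of_nonneg_of_forall_le_tendsto
      (fun N => Real.iSup_nonneg fun _ => abs_nonneg _) fun ε hε => ⟨_,
        fun N => ciSup_le (hbound N x (ε / 2) (ε / 2) (half_pos hε) (half_pos hε)), ?_⟩⟩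
  have h₁ := tendsto_weightTailSup (hW (ε / 2 / (2 * (1 + ε / 2))) (by positivity))
  have h₂ := tendsto_weightTailSup (hW (ε / 2 / 2) (by positivity))
  convert ((h₁.const_mul 2).const_add (ε / 2)).add ((h₂.const_mul 2).const_add (ε / 2)) using 2
  ring

/-- For every `x`, `N` and every `δ, η > 0`,
`sup_A (P̃_N(x,A) - P(x,A)) ≤ (η + 2 sup_{x'} P[|W_{x',N}-1| ≥ η/(2(1+η))])
  + (δ + 2 sup_{x'} P[|W_{x',N}-1| ≥ δ/2])`.
Consequently, under (W1), `lim_{N→∞} ‖P̃_N(x,·) - P(x,·)‖_TV = 0` for every `x`. -/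
theorem noisy_kernel_tv_convergence
    {X : Type*} [MeasurableSpace X] (μ : Measure X)
    (pi : X → ℝ) (q : X → X → ℝ)
    (hpi_pos : ∀ x, 0 < pi x) (hpi_meas : Measurable pi)
    (hq_meas : Measurable (Function.uncurry q)) (hq_nonneg : ∀ x y, 0 ≤ q x y)
    (hq_int : ∀ x, Integrable (fun y => q x y) μ)
    (hq_one : ∀ x, ∫ y, q x y ∂μ = 1)
    (Q : ℕ → Kernel X ℝ) [∀ N, IsMarkovKernel (Q N)]
    (hQ_pos : ∀ N x, (Q N) x {w : ℝ | w ≤ 0} = 0)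
    (hQ_mean : ∀ N x, ∫ w, w ∂((Q N) x) = 1) :
    (∀ (N : ℕ) (x : X) (δ η : ℝ), 0 < δ → 0 < η →
      (⨆ A : {A : Set X // MeasurableSet A},
          (noisyKer μ pi q Q N x A - mhKer μ pi q x A))
        ≤ (η + 2 * ⨆ x', (((Q N) x') {w : ℝ | η / (2 * (1 + η)) ≤ |w - 1|}).toReal)
          + (δ + 2 * ⨆ x', (((Q N) x') {w : ℝ | δ / 2 ≤ |w - 1|}).toReal)) ∧
    ((∀ δ : ℝ, 0 < δ →
        Filter.Tendsto (fun N : ℕ => ⨆ x, (Q N) x {w : ℝ | δ ≤ |w - 1|})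
          Filter.atTop (nhds 0)) →
      ∀ x : X,
        Filter.Tendsto
          (fun N : ℕ => ⨆ A : {A : Set X // MeasurableSet A},
            |noisyKer μ pi q Q N x A - mhKer μ pi q x A|)
          Filter.atTop (nhds 0)) :=
  noisy_kernel_tv_convergence_general μ pi q hpi_pos hpi_meas hq_meas hq_nonneg hq_one Q hQ_pos
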